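/- Let K be a smooth solution of the oriented associativity equations (AE) on ℝⁿ, let λ, μ ∈ ℝ with λ ≠ μ, let ψ_λ and ψ_μ be smooth solutions of the vector spectral problems with parameters λ and μ respectively, and let χ₋ be a smooth solution of the scalar spectral problem with parameter −λ. Define Φ^α = λμ ∂_ν∂_κ K^α ψ_λ^ν ψ_μ^κ χ₋ + (λμ/(λ−μ)) (∂_β χ₋) ψ_μ^β ψ_λ^α. Then the pair (G, Φ) with G^α = ψ_λ^α χ₋ satisfies the linearization of the vector spectral problem with parameter μ: ∂_β Φ^α = μ ∂_β∂_γ G^α ψ_μ^γ + μ ∂_β∂_γ K^α Φ^γ for all α,β. -/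

import Mathlib

noncomputable def pd {n : ℕ} (i : Fin n) (f : (Fin n → ℝ) → ℝ) : (Fin n → ℝ) → ℝ :=
  fun x => fderiv ℝ f x (Pi.single i 1)

lemma contDiff_pd {n : ℕ} (i : Fin n) {f : (Fin n → ℝ) → ℝ} (hf : ContDiff ℝ (⊤ : ℕ∞) f) :
    ContDiff ℝ (⊤ : ℕ∞) (pd i f) :=
  (hf.fderiv_right (m := (⊤ : ℕ∞)) le_rfl).clm_apply contDiff_const

lemma pd_add {n : ℕ} (i : Fin n) {f g : (Fin n → ℝ) → ℝ} (hf : ContDiff ℝ (⊤ : ℕ∞) f)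
    (hg : ContDiff ℝ (⊤ : ℕ∞) g) (x : Fin n → ℝ) :
    pd i (fun y => f y + g y) x = pd i f x + pd i g x := by
  unfold pd
  rw [fderiv_fun_add (hf.differentiable (by simp) x) (hg.differentiable (by simp) x)]
  rfl

lemma pd_mul {n : ℕ} (i : Fin n) {f g : (Fin n → ℝ) → ℝ} (hf : ContDiff ℝ (⊤ : ℕ∞) f)
    (hg : ContDiff ℝ (⊤ : ℕ∞) g) (x : Fin n → ℝ) :
    pd i (fun y => f y * g y) x = pd i f x * g x + f x * pd i g x := by
  unfold pd
  rw [fderiv_fun_mul (hf.differentiable (by simp) x) (hg.differentiable (by simp) x)]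
  simp
  ring

lemma pd_const_mul {n : ℕ} (i : Fin n) (c : ℝ) {f : (Fin n → ℝ) → ℝ} (hf : ContDiff ℝ (⊤ : ℕ∞) f)
    (x : Fin n → ℝ) :
    pd i (fun y => c * f y) x = c * pd i f x := by
  unfold pd
  rw [fderiv_const_mul (hf.differentiable (by simp) x)]
  simp

lemma pd_sum {n m : ℕ} (i : Fin n) {f : Fin m → (Fin n → ℝ) → ℝ}
    (hf : ∀ j, ContDiff ℝ (⊤ : ℕ∞) (f j)) (x : Fin n → ℝ) :
    pd i (fun y => ∑ j, f j y) x = ∑ j, pd i (f j) x := by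
  unfold pd
  rw [fderiv_fun_sum (fun j _ => (hf j).differentiable (by simp) x)]
  simp

lemma pd_pd_eq {n : ℕ} {f : (Fin n → ℝ) → ℝ} (hf : ContDiff ℝ (⊤ : ℕ∞) f) (i j : Fin n)
    (x : Fin n → ℝ) :
    pd i (pd j f) x = fderiv ℝ (fderiv ℝ f) x (Pi.single i 1) (Pi.single j 1) := by
  unfold pd
  rw [fderiv_clm_apply (((hf.fderiv_right (m := (⊤ : ℕ∞)) le_rfl).differentiable (by simp)) x)
    (differentiableAt_const _)]
  simp

lemma pd_comm {n : ℕ} {f : (Fin n → ℝ) → ℝ} (hf : ContDiff ℝ (⊤ : ℕ∞) f) (i j : Fin n)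
    (x : Fin n → ℝ) : pd i (pd j f) x = pd j (pd i f) x := by
  have hd : ∀ y, HasFDerivAt f (fderiv ℝ f y) y :=
    fun y => (hf.differentiable (by simp) y).hasFDerivAt
  have h2 : HasFDerivAt (fderiv ℝ f) (fderiv ℝ (fderiv ℝ f) x) x :=
    (((hf.fderiv_right (m := (⊤ : ℕ∞)) le_rfl).differentiable (by simp)) x).hasFDerivAt
  rw [pd_pd_eq hf, pd_pd_eq hf]
  exact second_derivative_symmetric hd h2 _ _


lemma sum2_congr {n : ℕ} {f g : Fin n → Fin n → ℝ} (h : ∀ i j, f i j = g i j) :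
    (∑ i, ∑ j, f i j) = ∑ i, ∑ j, g i j :=
  Finset.sum_congr rfl fun i _ => Finset.sum_congr rfl fun j _ => h i j

lemma sum3_congr {n : ℕ} {f g : Fin n → Fin n → Fin n → ℝ} (h : ∀ i j k, f i j k = g i j k) :
    (∑ i, ∑ j, ∑ k, f i j k) = ∑ i, ∑ j, ∑ k, g i j k :=
  Finset.sum_congr rfl fun i _ => Finset.sum_congr rfl fun j _ =>
    Finset.sum_congr rfl fun k _ => h i j k

lemma sum3_rot {n : ℕ} (f : Fin n → Fin n → Fin n → ℝ) :
    (∑ i, ∑ j, ∑ k, f i j k) = ∑ k, ∑ i, ∑ j, f i j k := by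
  calc (∑ i, ∑ j, ∑ k, f i j k) = ∑ i, ∑ k, ∑ j, f i j k :=
        Finset.sum_congr rfl fun i _ => Finset.sum_comm
    _ = ∑ k, ∑ i, ∑ j, f i j k := Finset.sum_comm

lemma alg {n : ℕ} (T2 : Fin n → Fin n → Fin n → ℝ) (T3 : Fin n → Fin n → Fin n → Fin n → ℝ)
    (a b d : Fin n → ℝ) (ch : ℝ) (lam mu c : ℝ)
    (hc : c * (lam - mu) = lam * mu)
    (α β : Fin n)
    (sym2 : ∀ i j k, T2 i j k = T2 j i k)
    (sym3 : ∀ i j k, T3 β i j k = T3 β j i k)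
    (ae : ∀ p q r s, ∑ ρ, T2 p ρ s * T2 q r ρ = ∑ ρ, T2 p q ρ * T2 ρ r s) :
    (lam * mu * ∑ ν, ∑ κ, ((T3 β ν κ α * a ν + T2 ν κ α * (lam * ∑ γ, T2 β γ ν * a γ)) * b κ
        + T2 ν κ α * a ν * (mu * ∑ γ, T2 β γ κ * b γ))) * ch
      + (lam * mu * ∑ ν, ∑ κ, T2 ν κ α * a ν * b κ) * d β
      + ((c * ∑ σ, ((-lam * ∑ ν, T2 β σ ν * d ν) * b σ
            + d σ * (mu * ∑ γ, T2 β γ σ * b γ))) * a α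
        + (c * ∑ σ, d σ * b σ) * (lam * ∑ γ, T2 β γ α * a γ))
    = mu * ∑ ν, ((lam * ∑ κ, (T3 β ν κ α * a κ + T2 ν κ α * (lam * ∑ γ, T2 β γ κ * a γ))) * ch
          + (lam * ∑ γ, T2 ν γ α * a γ) * d β
          + ((lam * ∑ γ, T2 β γ α * a γ) * d ν + a α * (-lam * ∑ σ, T2 β ν σ * d σ))) * b ν
      + mu * ∑ γ, T2 β γ α * ((lam * mu * ∑ ν, ∑ κ, T2 ν κ γ * a ν * b κ) * ch
          + (c * ∑ σ, d σ * b σ) * a γ) := by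
  have k1 : ∀ ν r, (∑ κ, T2 ν κ α * T2 β r κ) = ∑ γ, T2 β γ α * T2 ν r γ := by
    intro ν r
    calc (∑ κ, T2 ν κ α * T2 β r κ) = ∑ κ, T2 ν β κ * T2 κ r α := ae ν β r α
      _ = ∑ κ, T2 β ν κ * T2 κ r α :=
        Finset.sum_congr rfl fun κ _ => by rw [sym2 ν β κ]
      _ = ∑ γ, T2 β γ α * T2 ν r γ := (ae β ν r α).symm
  have h1 : (∑ i, ∑ j, lam * mu * T3 β i j α * a i * b j * ch)
      = ∑ i, ∑ j, lam * mu * T3 β i j α * a j * ch * b i := by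
    rw [Finset.sum_comm]
    exact sum2_congr fun i j => by rw [sym3 j i α]; ring
  have h2 : (∑ i, ∑ j, ∑ k, lam * mu * T2 i j α * lam * T2 β k i * a k * b j * ch)
      = ∑ i, ∑ j, ∑ k, lam * mu * T2 i j α * lam * T2 β k j * a k * ch * b i := by
    rw [Finset.sum_comm]
    exact sum3_congr fun i j k => by rw [sym2 j i α]; ring
  have h4 : (∑ i, ∑ j, lam * mu * T2 i j α * a i * b j * d β)
      = ∑ i, ∑ j, lam * mu * T2 i j α * a j * d β * b i := by
    rw [Finset.sum_comm]
    exact sum2_congr fun i j => by rw [sym2 j i α]; ring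
  have h3 : (∑ i, ∑ j, ∑ k, lam * mu * T2 i j α * a i * mu * T2 β k j * b k * ch)
      = ∑ i, ∑ j, ∑ k, mu * T2 β i α * lam * mu * T2 j k i * a j * b k * ch := by
    calc (∑ i, ∑ j, ∑ k, lam * mu * T2 i j α * a i * mu * T2 β k j * b k * ch)
        = ∑ i, ∑ k, ∑ j, lam * mu * T2 i j α * a i * mu * T2 β k j * b k * ch :=
          Finset.sum_congr rfl fun i _ => Finset.sum_comm
      _ = ∑ i, ∑ k, (∑ j, T2 i j α * T2 β k j) * (lam * mu * mu * ch * a i * b k) :=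
          sum2_congr fun i k => by
            rw [Finset.sum_mul]
            exact Finset.sum_congr rfl fun j _ => by ring
      _ = ∑ i, ∑ k, (∑ j, T2 β j α * T2 i k j) * (lam * mu * mu * ch * a i * b k) :=
          sum2_congr fun i k => by rw [k1 i k]
      _ = ∑ i, ∑ k, ∑ j, T2 β j α * T2 i k j * (lam * mu * mu * ch * a i * b k) :=
          sum2_congr fun i k => Finset.sum_mul _ _ _
      _ = ∑ j, ∑ i, ∑ k, T2 β j α * T2 i k j * (lam * mu * mu * ch * a i * b k) :=
          sum3_rot _
      _ = ∑ i, ∑ j, ∑ k, mu * T2 β i α * lam * mu * T2 j k i * a j * b k * ch :=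
          sum3_congr fun i j k => by ring
  have hL5 : (∑ i, ∑ j, lam * c * T2 β i j * d j * b i * a α)
      = lam * c * a α * ∑ i, ∑ j, T2 β i j * d j * b i := by
    simp only [Finset.mul_sum]
    exact sum2_congr fun i j => by ring
  have hL6 : (∑ i, ∑ j, c * d i * mu * T2 β j i * b j * a α)
      = mu * c * a α * ∑ i, ∑ j, T2 β i j * d j * b i := by
    rw [Finset.sum_comm]
    simp only [Finset.mul_sum]
    exact sum2_congr fun i j => by ring
  have hR5 : (∑ i, ∑ j, mu * a α * lam * T2 β i j * d j * b i)
      = lam * mu * a α * ∑ i, ∑ j, T2 β i j * d j * b i := by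
    simp only [Finset.mul_sum]
    exact sum2_congr fun i j => by ring
  have hL7 : (∑ i, ∑ j, c * d j * b j * lam * T2 β i α * a i)
      = lam * c * ∑ i, ∑ j, T2 β i α * a i * d j * b j := by
    simp only [Finset.mul_sum]
    exact sum2_congr fun i j => by ring
  have hR4 : (∑ i, ∑ j, lam * mu * T2 β j α * a j * d i * b i)
      = lam * mu * ∑ i, ∑ j, T2 β i α * a i * d j * b j := by
    rw [Finset.sum_comm]
    simp only [Finset.mul_sum]
    exact sum2_congr fun i j => by ring
  have hR7 : (∑ i, ∑ j, mu * T2 β i α * c * d j * b j * a i)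
      = mu * c * ∑ i, ∑ j, T2 β i α * a i * d j * b j := by
    simp only [Finset.mul_sum]
    exact sum2_congr fun i j => by ring
  simp only [Finset.mul_sum, Finset.sum_mul, Finset.sum_add_distrib, mul_add, add_mul,
    neg_mul, mul_neg, Finset.sum_neg_distrib]
  ring_nf
  rw [h1, (by ring_nf : (∑ x, ∑ x_1, ∑ x_2, lam ^ 2 * mu * ch * T2 x x_1 α * T2 β x_2 x * a x_2 * b x_1)
      = ∑ i, ∑ j, ∑ k, lam * mu * T2 i j α * lam * T2 β k i * a k * b j * ch), h2,
    (by ring_nf : (∑ x, ∑ x_1, ∑ x_2, lam * mu ^ 2 * ch * T2 x x_1 α * a x * T2 β x_2 x_1 * b x_2)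
      = ∑ i, ∑ j, ∑ k, lam * mu * T2 i j α * a i * mu * T2 β k j * b k * ch), h3,
    (by ring_nf : (∑ x, ∑ x_1, lam * mu * T2 x x_1 α * a x * b x_1 * d β)
      = ∑ i, ∑ j, lam * mu * T2 i j α * a i * b j * d β), h4,
    (by ring_nf : (∑ x, ∑ x_1, lam * c * T2 β x x_1 * d x_1 * b x * a α)
      = ∑ i, ∑ j, lam * c * T2 β i j * d j * b i * a α), hL5,
    (by ring_nf : (∑ x, ∑ x_1, mu * c * a α * d x * T2 β x_1 x * b x_1)
      = ∑ i, ∑ j, c * d i * mu * T2 β j i * b j * a α), hL6,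
    (by ring_nf : (∑ x, ∑ x_1, lam * c * d x_1 * b x_1 * T2 β x α * a x)
      = ∑ i, ∑ j, c * d j * b j * lam * T2 β i α * a i), hL7,
    (by ring_nf : (∑ x, ∑ x_1, lam * mu * a α * T2 β x x_1 * d x_1 * b x)
      = ∑ i, ∑ j, mu * a α * lam * T2 β i j * d j * b i), hR5,
    (by ring_nf : (∑ x, ∑ x_1, lam * mu * T2 β x_1 α * a x_1 * d x * b x)
      = ∑ i, ∑ j, lam * mu * T2 β j α * a j * d i * b i), hR4,
    (by ring_nf : (∑ x, ∑ x_1, mu * c * T2 β x α * d x_1 * b x_1 * a x)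
      = ∑ i, ∑ j, mu * T2 β i α * c * d j * b j * a i), hR7,
    (by ring_nf : (∑ x, ∑ x_1, lam * mu * ch * T3 β x x_1 α * a x_1 * b x)
      = ∑ i, ∑ j, lam * mu * T3 β i j α * a j * ch * b i),
    (by ring_nf : (∑ x, ∑ x_1, ∑ x_2, lam ^ 2 * mu * ch * T2 x x_1 α * T2 β x_2 x_1 * a x_2 * b x)
      = ∑ i, ∑ j, ∑ k, lam * mu * T2 i j α * lam * T2 β k j * a k * ch * b i),
    (by ring_nf : (∑ x, ∑ x_1, lam * mu * d β * T2 x x_1 α * a x_1 * b x)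
      = ∑ i, ∑ j, lam * mu * T2 i j α * a j * d β * b i),
    (by ring_nf : (∑ x, ∑ x_1, ∑ x_2, lam * mu ^ 2 * ch * T2 β x α * T2 x_1 x_2 x * a x_1 * b x_2)
      = ∑ i, ∑ j, ∑ k, mu * T2 β i α * lam * mu * T2 j k i * a j * b k * ch)]
  linear_combination ((∑ i, ∑ j, T2 β i α * a i * d j * b j)
    - a α * ∑ i, ∑ j, T2 β i j * d j * b i) * hc
/-- the pair `(G, Φ)` with `G^α = ψ_λ^α χ₋` and
`Φ^α = λμ ∂_ν∂_κ K^α ψ_λ^ν ψ_μ^κ χ₋ + (λμ/(λ−μ)) (∂_β χ₋) ψ_μ^β ψ_λ^α`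
satisfies the linearization of the vector spectral problem with parameter `μ`. -/
theorem extended_flow_sigma_vector_spectral
    {n : ℕ} (hn : 1 ≤ n)
    (K ψl ψm : Fin n → (Fin n → ℝ) → ℝ) (χm : (Fin n → ℝ) → ℝ) (lam mu : ℝ)
    (hlm : lam ≠ mu)
    (hK : ∀ α, ContDiff ℝ (⊤ : ℕ∞) (K α))
    (hψl : ∀ α, ContDiff ℝ (⊤ : ℕ∞) (ψl α))
    (hψm : ∀ α, ContDiff ℝ (⊤ : ℕ∞) (ψm α))
    (hχm : ContDiff ℝ (⊤ : ℕ∞) χm)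
    (hAE : ∀ α β γ ν, ∀ x : Fin n → ℝ,
      ∑ ρ, pd α (pd ρ (K ν)) x * pd β (pd γ (K ρ)) x
        = ∑ ρ, pd α (pd β (K ρ)) x * pd ρ (pd γ (K ν)) x)
    (hspl : ∀ α β, ∀ x : Fin n → ℝ,
      pd β (ψl α) x = lam * ∑ γ, pd β (pd γ (K α)) x * ψl γ x)
    (hspm : ∀ α β, ∀ x : Fin n → ℝ,
      pd β (ψm α) x = mu * ∑ γ, pd β (pd γ (K α)) x * ψm γ x)
    (hssp : ∀ α γ, ∀ x : Fin n → ℝ,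
      pd α (pd γ χm) x = (-lam) * ∑ ν, pd α (pd γ (K ν)) x * pd ν χm x) :
    ∀ α β, ∀ x : Fin n → ℝ,
      pd β (fun y =>
          lam * mu * (∑ ν, ∑ κ, pd ν (pd κ (K α)) y * ψl ν y * ψm κ y) * χm y
          + (lam * mu / (lam - mu)) * (∑ σ, pd σ χm y * ψm σ y) * ψl α y) x
        = mu * (∑ γ, pd β (pd γ (fun y => ψl α y * χm y)) x * ψm γ x)
          + mu * (∑ γ, pd β (pd γ (K α)) x
              * (lam * mu * (∑ ν, ∑ κ, pd ν (pd κ (K γ)) x * ψl ν x * ψm κ x) * χm x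
                 + (lam * mu / (lam - mu)) * (∑ σ, pd σ χm x * ψm σ x) * ψl γ x)) := by
  intro α β x
  -- smoothness facts
  have hs2 : ∀ ν κ a, ContDiff ℝ (⊤ : ℕ∞) (pd ν (pd κ (K a))) :=
    fun ν κ a => contDiff_pd _ (contDiff_pd _ (hK a))
  have hs3 : ∀ ν κ a, ContDiff ℝ (⊤ : ℕ∞) (fun y => pd ν (pd κ (K a)) y * ψl ν y * ψm κ y) :=
    fun ν κ a => ((hs2 ν κ a).mul (hψl ν)).mul (hψm κ)
  have hsIn : ∀ ν a, ContDiff ℝ (⊤ : ℕ∞) (fun y => ∑ κ, pd ν (pd κ (K a)) y * ψl ν y * ψm κ y) :=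
    fun ν a => ContDiff.sum fun κ _ => hs3 ν κ a
  have hsS : ∀ a, ContDiff ℝ (⊤ : ℕ∞) (fun y => ∑ ν, ∑ κ, pd ν (pd κ (K a)) y * ψl ν y * ψm κ y) :=
    fun a => ContDiff.sum fun ν _ => hsIn ν a
  have hsχ1 : ∀ σ, ContDiff ℝ (⊤ : ℕ∞) (pd σ χm) := fun σ => contDiff_pd σ hχm
  have hsBt : ∀ σ, ContDiff ℝ (⊤ : ℕ∞) (fun y => pd σ χm y * ψm σ y) :=
    fun σ => (hsχ1 σ).mul (hψm σ)
  have hsB : ContDiff ℝ (⊤ : ℕ∞) (fun y => ∑ σ, pd σ χm y * ψm σ y) :=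
    ContDiff.sum fun σ _ => hsBt σ
  have hsF1 : ContDiff ℝ (⊤ : ℕ∞)
      (fun y => lam * mu * (∑ ν, ∑ κ, pd ν (pd κ (K α)) y * ψl ν y * ψm κ y) * χm y) :=
    ((contDiff_const.mul (hsS α)).mul hχm)
  have hsF2 : ContDiff ℝ (⊤ : ℕ∞)
      (fun y => lam * mu / (lam - mu) * (∑ σ, pd σ χm y * ψm σ y) * ψl α y) :=
    ((contDiff_const.mul hsB).mul (hψl α))
  -- LHS expansion
  have L0 : pd β (fun y =>
        lam * mu * (∑ ν, ∑ κ, pd ν (pd κ (K α)) y * ψl ν y * ψm κ y) * χm y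
        + lam * mu / (lam - mu) * (∑ σ, pd σ χm y * ψm σ y) * ψl α y) x
      = pd β (fun y => lam * mu * (∑ ν, ∑ κ, pd ν (pd κ (K α)) y * ψl ν y * ψm κ y) * χm y) x
        + pd β (fun y => lam * mu / (lam - mu) * (∑ σ, pd σ χm y * ψm σ y) * ψl α y) x :=
    pd_add β hsF1 hsF2 x
  have L1 : pd β (fun y =>
        lam * mu * (∑ ν, ∑ κ, pd ν (pd κ (K α)) y * ψl ν y * ψm κ y) * χm y) x
      = pd β (fun y => lam * mu * (∑ ν, ∑ κ, pd ν (pd κ (K α)) y * ψl ν y * ψm κ y)) x * χm x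
        + lam * mu * (∑ ν, ∑ κ, pd ν (pd κ (K α)) x * ψl ν x * ψm κ x) * pd β χm x :=
    pd_mul β (contDiff_const.mul (hsS α)) hχm x
  have L2 : pd β (fun y => lam * mu * (∑ ν, ∑ κ, pd ν (pd κ (K α)) y * ψl ν y * ψm κ y)) x
      = lam * mu * pd β (fun y => ∑ ν, ∑ κ, pd ν (pd κ (K α)) y * ψl ν y * ψm κ y) x :=
    pd_const_mul β (lam * mu) (hsS α) x
  have L3 : pd β (fun y => ∑ ν, ∑ κ, pd ν (pd κ (K α)) y * ψl ν y * ψm κ y) x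
      = ∑ ν, pd β (fun y => ∑ κ, pd ν (pd κ (K α)) y * ψl ν y * ψm κ y) x :=
    pd_sum β (fun ν => hsIn ν α) x
  have L4 : ∀ ν, pd β (fun y => ∑ κ, pd ν (pd κ (K α)) y * ψl ν y * ψm κ y) x
      = ∑ κ, pd β (fun y => pd ν (pd κ (K α)) y * ψl ν y * ψm κ y) x :=
    fun ν => pd_sum β (fun κ => hs3 ν κ α) x
  have L5 : ∀ ν κ, pd β (fun y => pd ν (pd κ (K α)) y * ψl ν y * ψm κ y) x
      = (pd β (pd ν (pd κ (K α))) x * ψl ν x + pd ν (pd κ (K α)) x * pd β (ψl ν) x) * ψm κ x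
        + pd ν (pd κ (K α)) x * ψl ν x * pd β (ψm κ) x := by
    intro ν κ
    have h := pd_mul β (f := fun y => pd ν (pd κ (K α)) y * ψl ν y) (g := ψm κ)
      ((hs2 ν κ α).mul (hψl ν)) (hψm κ) x
    rw [pd_mul β (hs2 ν κ α) (hψl ν) x] at h
    exact h
  have M1 : pd β (fun y => lam * mu / (lam - mu) * (∑ σ, pd σ χm y * ψm σ y) * ψl α y) x
      = pd β (fun y => lam * mu / (lam - mu) * (∑ σ, pd σ χm y * ψm σ y)) x * ψl α x
        + lam * mu / (lam - mu) * (∑ σ, pd σ χm x * ψm σ x) * pd β (ψl α) x :=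
    pd_mul β (contDiff_const.mul hsB) (hψl α) x
  have M2 : pd β (fun y => lam * mu / (lam - mu) * (∑ σ, pd σ χm y * ψm σ y)) x
      = lam * mu / (lam - mu) * pd β (fun y => ∑ σ, pd σ χm y * ψm σ y) x :=
    pd_const_mul β (lam * mu / (lam - mu)) hsB x
  have M3 : pd β (fun y => ∑ σ, pd σ χm y * ψm σ y) x
      = ∑ σ, pd β (fun y => pd σ χm y * ψm σ y) x :=
    pd_sum β hsBt x
  have M4 : ∀ σ, pd β (fun y => pd σ χm y * ψm σ y) x
      = pd β (pd σ χm) x * ψm σ x + pd σ χm x * pd β (ψm σ) x :=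
    fun σ => pd_mul β (hsχ1 σ) (hψm σ) x
  -- RHS expansion
  have R0 : ∀ γ : Fin n, pd γ (fun y => ψl α y * χm y)
      = fun y => pd γ (ψl α) y * χm y + ψl α y * pd γ χm y :=
    fun γ => funext fun y => pd_mul γ (hψl α) hχm y
  have R1 : ∀ γ : Fin n, pd β (fun y => pd γ (ψl α) y * χm y + ψl α y * pd γ χm y) x
      = pd β (fun y => pd γ (ψl α) y * χm y) x + pd β (fun y => ψl α y * pd γ χm y) x :=
    fun γ => pd_add β ((contDiff_pd γ (hψl α)).mul hχm) ((hψl α).mul (hsχ1 γ)) x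
  have R2 : ∀ γ : Fin n, pd β (fun y => pd γ (ψl α) y * χm y) x
      = pd β (pd γ (ψl α)) x * χm x + pd γ (ψl α) x * pd β χm x :=
    fun γ => pd_mul β (contDiff_pd γ (hψl α)) hχm x
  have R3 : ∀ γ : Fin n, pd β (fun y => ψl α y * pd γ χm y) x
      = pd β (ψl α) x * pd γ χm x + ψl α x * pd β (pd γ χm) x :=
    fun γ => pd_mul β (hψl α) (hsχ1 γ) x
  have R4 : ∀ γ : Fin n, pd β (pd γ (ψl α)) x
      = lam * ∑ ρ, (pd β (pd γ (pd ρ (K α))) x * ψl ρ x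
          + pd γ (pd ρ (K α)) x * pd β (ψl ρ) x) := by
    intro γ
    have hfn : pd γ (ψl α) = fun y => lam * ∑ ρ, pd γ (pd ρ (K α)) y * ψl ρ y :=
      funext fun y => hspl α γ y
    rw [hfn]
    have hsum : ContDiff ℝ (⊤ : ℕ∞) (fun y => ∑ ρ, pd γ (pd ρ (K α)) y * ψl ρ y) :=
      ContDiff.sum fun ρ _ => (hs2 γ ρ α).mul (hψl ρ)
    rw [pd_const_mul β lam hsum x]
    rw [pd_sum β (fun ρ => (hs2 γ ρ α).mul (hψl ρ)) x]
    congr 1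
    exact Finset.sum_congr rfl fun ρ _ => pd_mul β (hs2 γ ρ α) (hψl ρ) x
  rw [L0, L1, L2, L3, M1, M2, M3]
  simp only [L4, L5, M4]
  simp only [R0, R1, R2, R3, R4]
  simp only [hspl, hspm, hssp]
  have hc : (lam * mu / (lam - mu)) * (lam - mu) = lam * mu :=
    div_mul_cancel₀ _ (sub_ne_zero.mpr hlm)
  have sym2' : ∀ i j k : Fin n, pd i (pd j (K k)) x = pd j (pd i (K k)) x :=
    fun i j k => pd_comm (hK k) i j x
  have sym3' : ∀ i j k : Fin n, pd β (pd i (pd j (K k))) x = pd β (pd j (pd i (K k))) x := by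
    intro i j k
    have h : pd i (pd j (K k)) = pd j (pd i (K k)) := funext fun y => pd_comm (hK k) i j y
    rw [h]
  exact alg (fun i j k => pd i (pd j (K k)) x) (fun i j k l => pd i (pd j (pd k (K l))) x)
    (fun i => ψl i x) (fun i => ψm i x) (fun i => pd i χm x) (χm x) lam mu
    (lam * mu / (lam - mu)) hc α β sym2' sym3' (fun p q r s => hAE p q r s x)
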